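/- If d = gcd(m,n) ≥ 2, then the Baumslag-Solitar group BS(m,n) contains a free non-abelian subgroup of infinite (countable) rank. -/

import Mathlib

/-- The defining relation of the Baumslag-Solitar group `BS(m,n)`:
`t⁻¹ * a^m * t * a^(-n)`. -/
def BSrels (m n : ℤ) : Set (FreeGroup (Fin 2)) :=
  {(FreeGroup.of 1)⁻¹ * (FreeGroup.of 0) ^ m * (FreeGroup.of 1) * ((FreeGroup.of 0) ^ n)⁻¹}

/-- The Baumslag-Solitar group `BS(m,n) = ⟨a, t ∣ t⁻¹ aᵐ t = aⁿ⟩`. -/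
abbrev BS (m n : ℤ) : Type := PresentedGroup (BSrels m n)

/-- The generator `a` of `BS(m,n)`. -/
def bsa (m n : ℤ) : BS m n := PresentedGroup.of 0

/-- The generator `t` of `BS(m,n)`. -/
def bst (m n : ℤ) : BS m n := PresentedGroup.of 1
/-!
Write `d = gcd(m, n)` and let `ℤ/d` act on the free group `F(ℤ/d)` by translating the basis.
Sending `a` to the translation by `1` and `t` to the basis element `s₀` defines a homomorphism
`BS(m,n) → F(ℤ/d) ⋊ ℤ/d`, because `aᵐ` and `aⁿ` go to the identity. It maps
`yₖ = tᵏ (a t a⁻¹) t⁻ᵏ` to `s₀ᵏ s₁ s₀⁻ᵏ`, and `s₀ ≠ s₁` since `d ≠ 1`. In any free group the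
conjugates `bᵏ a b⁻ᵏ` of a letter `a` by the powers of another letter `b` are free: the same
construction with `ℤ` in place of `ℤ/d`, `b ↦` translation by `1` and `a ↦ e₀`, sends them to
the basis elements `eₖ` of `F(ℤ)`. Hence `k ↦ yₖ` extends to an injection `F(ℤ) → BS(m,n)`.
-/

open Multiplicative SemidirectProduct

namespace FreeGroup

def translate (A : Type*) [AddGroup A] : Multiplicative A →* MulAut (FreeGroup A) where
  toFun k := freeGroupCongr (Equiv.addLeft k.toAdd)
  map_one' := by ext; simp
  map_mul' k l := by
    rw [MulAut.mul_def, freeGroupCongr_trans]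
    congr 1
    ext
    simp

variable {A : Type*}

@[simp]
theorem translate_of [AddGroup A] (k : Multiplicative A) (a : A) :
    translate A k (of a) = of (k.toAdd + a) :=
  rfl

theorem inr_ofAdd_one_zpow [AddGroupWithOne A] (k : ℤ) :
    (inr (ofAdd 1) : FreeGroup A ⋊[translate A] Multiplicative A) ^ k = inr (ofAdd (k : A)) := by
  rw [← map_zpow, ← ofAdd_zsmul, zsmul_one]

theorem inr_mul_inl_of_mul_inr_inv [AddGroup A] (k a : A) :
    (inr (ofAdd k) * inl (of a) * (inr (ofAdd k))⁻¹ : FreeGroup A ⋊[translate A] Multiplicative A) =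
      inl (of (k + a)) := by
  rw [← _root_.map_inv, ← inl_aut, translate_of, toAdd_ofAdd]

theorem injective_lift_conj_zpow_of_ne {S : Type*} {a b : S} (hab : a ≠ b) :
    Function.Injective (lift fun k : ℤ => of b ^ k * of a * (of b ^ k)⁻¹) := by
  classical
  let ρ : FreeGroup S →* FreeGroup ℤ ⋊[translate ℤ] Multiplicative ℤ :=
    lift fun s => if s = b then inr (ofAdd 1) else if s = a then inl (of 0) else 1
  have hρ : ρ.comp (lift fun k : ℤ => of b ^ k * of a * (of b ^ k)⁻¹) = inl := by
    have hb : ρ (of b) = inr (ofAdd 1) := by simp [ρ]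
    have ha : ρ (of a) = inl (of 0) := by simp [ρ, hab]
    refine ext_hom _ _ fun k => ?_
    rw [MonoidHom.comp_apply, lift_apply_of, _root_.map_mul, _root_.map_mul, _root_.map_inv,
      map_zpow, hb, ha, inr_ofAdd_one_zpow, inr_mul_inl_of_mul_inr_inv, add_zero, Int.cast_id]
  refine Function.Injective.of_comp (f := ρ) ?_
  rw [← MonoidHom.coe_comp, hρ]
  exact inl_injective

theorem inr_ofAdd_one_zpow_eq_one_of_dvd {d : ℕ} {k : ℤ} (h : (d : ℤ) ∣ k) :
    (inr (ofAdd 1) : FreeGroup (ZMod d) ⋊[translate (ZMod d)] Multiplicative (ZMod d)) ^ k = 1 := by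
  rw [inr_ofAdd_one_zpow, (ZMod.intCast_zmod_eq_zero_iff_dvd k d).2 h, ofAdd_zero, _root_.map_one]

end FreeGroup

namespace BS

variable {m n : ℤ} {G : Type*} [Group G]

def lift (x y : G) (h : y⁻¹ * x ^ m * y = x ^ n) : BS m n →* G :=
  PresentedGroup.toGroup (f := ![x, y]) <| by
    rintro r rfl
    simpa [mul_inv_eq_one] using h

@[simp]
theorem lift_bsa (x y : G) (h : y⁻¹ * x ^ m * y = x ^ n) : lift x y h (bsa m n) = x :=
  PresentedGroup.toGroup.of _

@[simp]
theorem lift_bst (x y : G) (h : y⁻¹ * x ^ m * y = x ^ n) : lift x y h (bst m n) = y :=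
  PresentedGroup.toGroup.of _

theorem injective_lift_conj_zpow_of_gcd_ne_one (hd : Int.gcd m n ≠ 1) :
    Function.Injective (FreeGroup.lift fun k : ℤ =>
      bst m n ^ k * (bsa m n * bst m n * (bsa m n)⁻¹) * (bst m n ^ k)⁻¹) := by
  set d := Int.gcd m n
  have : Nontrivial (ZMod d) := ZMod.nontrivial_iff.2 hd
  have hrel : (inl (FreeGroup.of 0))⁻¹ * inr (ofAdd 1) ^ m * inl (FreeGroup.of 0) =
      (inr (ofAdd 1) : FreeGroup (ZMod d) ⋊[FreeGroup.translate _] Multiplicative _) ^ n := by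
    rw [FreeGroup.inr_ofAdd_one_zpow_eq_one_of_dvd (Int.gcd_dvd_left m n),
      FreeGroup.inr_ofAdd_one_zpow_eq_one_of_dvd (Int.gcd_dvd_right m n), mul_one, inv_mul_cancel]
  let ρ := lift _ _ hrel
  have hρ : ρ.comp (FreeGroup.lift fun k : ℤ =>
        bst m n ^ k * (bsa m n * bst m n * (bsa m n)⁻¹) * (bst m n ^ k)⁻¹) =
      inl.comp (FreeGroup.lift fun k : ℤ => .of 0 ^ k * .of 1 * (.of 0 ^ k)⁻¹) := by
    refine FreeGroup.ext_hom _ _ fun k => ?_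
    simp only [ρ, MonoidHom.comp_apply, FreeGroup.lift_apply_of, map_mul, map_inv, map_zpow,
      lift_bsa, lift_bst, FreeGroup.inr_mul_inl_of_mul_inr_inv, add_zero]
  refine Function.Injective.of_comp (f := ρ) ?_
  rw [← MonoidHom.coe_comp, hρ, MonoidHom.coe_comp]
  exact inl_injective.comp (FreeGroup.injective_lift_conj_zpow_of_ne one_ne_zero)

end BS

theorem bs_contains_free_subgroup_of_infinite_rank_general (m n : ℤ)
    (hd : 2 ≤ Int.gcd m n) :
    ∃ H : Subgroup (BS m n), Nonempty (H ≃* FreeGroup ℕ) := by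
  have hψ := BS.injective_lift_conj_zpow_of_gcd_ne_one (m := m) (n := n) (by omega)
  exact ⟨_, ⟨(MonoidHom.ofInjective hψ).symm.trans (FreeGroup.freeGroupCongr Equiv.intEquivNat)⟩⟩

/-- If `d = gcd(m,n) ≥ 2`, then `BS(m,n)` contains a free non-abelian subgroup of
countably infinite rank, i.e. a subgroup isomorphic to the free group on `ℕ`. -/
theorem bs_contains_free_subgroup_of_infinite_rank (m n : ℤ) (hm : m ≠ 0) (hn : n ≠ 0)
    (hd : 2 ≤ Int.gcd m n) :
    ∃ H : Subgroup (BS m n), Nonempty (H ≃* FreeGroup ℕ) :=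
  bs_contains_free_subgroup_of_infinite_rank_general m n hd
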